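/- arXiv:2512.10906 — 2 statements merged into one kernel-verified Lean document; each statement's English description precedes it below -/
import Mathlib

section
/- Let r ≥ 0, y₀ ∈ ℝⁿ, C ∈ ℝ^{m×n}, and D ∈ S^m_{++}. For every x ∈ ℝ^m there exists y ∈ ℝⁿ with ‖y−y₀‖₂² ≤ r such that (x+Cy)ᵀD(x+Cy) ≥ r‖CᵀDC‖_∞. Concretely, y = y₀ + α(x)ξ works, where ξ is a unit eigenvector of CᵀDC for its largest eigenvalue and α(x) = √r·sgn((x+Cy₀)ᵀDCξ) with the convention sgn(0) = 1. -/
/-!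
Write `v = x + C y₀` and `w = C ξ`, so that `x + C y = v + α w`. Since `D` is symmetric,
`(v + α w)ᵀ D (v + α w) = vᵀDv + 2α vᵀDw + α² wᵀDw`. Here `vᵀDv ≥ 0` because `D ⪰ 0`,
the sign of `α` is chosen to make `α vᵀDw ≥ 0`, and `α² wᵀDw = r ξᵀ(CᵀDC)ξ = r‖CᵀDC‖_∞`
because `ξ` is a unit eigenvector for that eigenvalue.
-/

open Matrix
open scoped ENNReal

noncomputable def singVals {n : ℕ} (A : Matrix (Fin n) (Fin n) ℝ) : Fin n → ℝ :=
  fun i => Real.sqrt ((show (Aᵀ * A).IsHermitian by simpa using Matrix.isHermitian_conjTranspose_mul_self A).eigenvalues i)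

/-- The Schatten `p`-norm of a square real matrix, defined via its singular values. -/
noncomputable def schattenNorm {n : ℕ} (p : ℝ≥0∞) (A : Matrix (Fin n) (Fin n) ℝ) : ℝ :=
  if p = ⊤ then ⨆ i, singVals A i
  else (∑ i, singVals A i ^ p.toReal) ^ (1 / p.toReal)

section QuadraticForm

variable {ι R : Type*} [Fintype ι] [CommRing R]

theorem Matrix.IsSymm.dotProduct_mulVec_comm {D : Matrix ι ι R} (hD : D.IsSymm) (v w : ι → R) :
    w ⬝ᵥ (D *ᵥ v) = v ⬝ᵥ (D *ᵥ w) := by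
  rw [dotProduct_mulVec, ← mulVec_transpose, hD.eq, dotProduct_comm]

theorem Matrix.IsSymm.dotProduct_mulVec_add_smul {D : Matrix ι ι R} (hD : D.IsSymm)
    (v w : ι → R) (a : R) :
    (v + a • w) ⬝ᵥ (D *ᵥ (v + a • w)) =
      v ⬝ᵥ (D *ᵥ v) + 2 * a * (v ⬝ᵥ (D *ᵥ w)) + a ^ 2 * (w ⬝ᵥ (D *ᵥ w)) := by
  simp only [mulVec_add, mulVec_smul, dotProduct_add, add_dotProduct, dotProduct_smul,
    smul_dotProduct, smul_eq_mul, hD.dotProduct_mulVec_comm v w]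
  ring

end QuadraticForm

theorem Matrix.dotProduct_transpose_mul_mul_mulVec {m n R : Type*} [Fintype m] [Fintype n]
    [CommSemiring R] (C : Matrix m n R) (D : Matrix m m R) (ξ : n → R) :
    ξ ⬝ᵥ ((Cᵀ * D * C) *ᵥ ξ) = (C *ᵥ ξ) ⬝ᵥ (D *ᵥ (C *ᵥ ξ)) := by
  rw [Matrix.mul_assoc, ← mulVec_mulVec, ← mulVec_mulVec, dotProduct_mulVec, vecMul_transpose]

theorem Matrix.PosSemidef.le_dotProduct_mulVec_add_smul {ι : Type*} [Fintype ι]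
    {D : Matrix ι ι ℝ} (hD : D.PosSemidef) {v w : ι → ℝ} {a : ℝ}
    (ha : 0 ≤ a * (v ⬝ᵥ (D *ᵥ w))) :
    a ^ 2 * (w ⬝ᵥ (D *ᵥ w)) ≤ (v + a • w) ⬝ᵥ (D *ᵥ (v + a • w)) := by
  have hv : 0 ≤ v ⬝ᵥ (D *ᵥ v) := by simpa using hD.dotProduct_mulVec_nonneg v
  have hsymm : D.IsSymm := isHermitian_iff_isSymm.mp hD.isHermitian
  rw [hsymm.dotProduct_mulVec_add_smul]
  linarith

theorem sqrt_mul_sign_sq {r : ℝ} (hr : 0 ≤ r) (p : Prop) [Decidable p] :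
    (√r * if p then -1 else 1) ^ 2 = r := by
  split_ifs <;> simp [Real.sq_sqrt hr]

theorem sqrt_mul_sign_mul_nonneg (r t : ℝ) : 0 ≤ (√r * if t < 0 then -1 else 1) * t := by
  have := Real.sqrt_nonneg r
  split_ifs with ht <;> nlinarith

/-- For every `x ∈ ℝ^m` the point `y = y₀ + α(x) ξ`, with
`α(x) = √r · sgn((x+Cy₀)ᵀDCξ)` (and `sgn 0 = 1`), is feasible and satisfies
`(x+Cy)ᵀD(x+Cy) ≥ r‖CᵀDC‖_∞`. -/
theorem stmt1 {m n : ℕ} (r : ℝ) (hr : 0 ≤ r) (y₀ : Fin n → ℝ)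
    (C : Matrix (Fin m) (Fin n) ℝ) (D : Matrix (Fin m) (Fin m) ℝ) (hD : D.PosDef)
    (ξ : Fin n → ℝ) (hξunit : ∑ i, ξ i ^ 2 = 1)
    (hξeig : (Cᵀ * D * C) *ᵥ ξ = schattenNorm ⊤ (Cᵀ * D * C) • ξ)
    (x : Fin m → ℝ) (α : ℝ)
    (hα : α = Real.sqrt r *
        (if (x + C *ᵥ y₀) ⬝ᵥ (D *ᵥ (C *ᵥ ξ)) < 0 then (-1 : ℝ) else 1))
    (y : Fin n → ℝ) (hy : y = fun i => y₀ i + α * ξ i) :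
    (∑ i, (y i - y₀ i) ^ 2) ≤ r ∧
      r * schattenNorm ⊤ (Cᵀ * D * C) ≤ (x + C *ᵥ y) ⬝ᵥ (D *ᵥ (x + C *ᵥ y)) := by
  have hα2 : α ^ 2 = r := hα ▸ sqrt_mul_sign_sq hr _
  have hy' : y = y₀ + α • ξ := hy
  refine ⟨le_of_eq ?_, ?_⟩
  · calc ∑ i, (y i - y₀ i) ^ 2 = α ^ 2 * ∑ i, ξ i ^ 2 := by
          simp only [hy, add_sub_cancel_left, mul_pow, Finset.mul_sum]
      _ = r := by rw [hξunit, mul_one, hα2]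
  · have hξξ : ξ ⬝ᵥ ξ = 1 := by simpa only [dotProduct, sq] using hξunit
    have hw : (C *ᵥ ξ) ⬝ᵥ (D *ᵥ (C *ᵥ ξ)) = schattenNorm ⊤ (Cᵀ * D * C) := by
      rw [← dotProduct_transpose_mul_mul_mulVec, hξeig, dotProduct_smul, hξξ, smul_eq_mul, mul_one]
    have hxy : x + C *ᵥ y = (x + C *ᵥ y₀) + α • (C *ᵥ ξ) := by
      rw [hy', mulVec_add, mulVec_smul, add_assoc]
    rw [hxy, ← hα2, ← hw]
    exact hD.posSemidef.le_dotProduct_mulVec_add_smul (hα ▸ sqrt_mul_sign_mul_nonneg _ _)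
end

section
/- Let p ∈ (1,∞] and let q ∈ [1,∞) satisfy 1/p + 1/q = 1. Let Σ̂ ∈ S₊ⁿ, r₂ ≥ 0, and let C ∈ S₊ⁿ with C ≠ 0. Define Σ* := Σ̂ + r₂‖C‖_q^{−(q−1)} C^{q−1}, where C^{q−1} is the matrix power defined by the spectral (continuous functional) calculus and with the convention C^{q−1} = I when q = 1 (i.e., p = ∞). Then Σ* ∈ S₊ⁿ, ‖Σ*−Σ̂‖_p = r₂, and tr(Σ*C) = tr(Σ̂C) + r₂‖C‖_q. -/
/-!
Diagonalise `C = U diag(λ) Uᵀ` and put `N = ‖C‖_q = ‖λ‖_q`. Then `Σ⋆ - Σ̂ = U diag(c λᵢ^(q-1)) Uᵀ`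
with `c = r₂ N^(-(q-1))`: a nonnegative diagonal matrix conjugated by an orthogonal one, so it is
PSD and its singular values are the entries `c λᵢ^(q-1)` (compare characteristic polynomials).
Since `(q-1) p = q`, the vector `(λᵢ/N)^(q-1)` is the unit vector of `ℓ^p` attaining equality in
Hölder's inequality against `λ`, which gives `‖Σ⋆ - Σ̂‖_p = r₂` and
`tr((Σ⋆ - Σ̂) C) = c ∑ λᵢ^q = r₂ N`. For `q = 1` all entries equal `r₂`.
-/

open Matrix
open scoped ENNReal

/-- Matrix power of a symmetric matrix via the spectral (continuous functional) calculus: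
`A^t := U diag(λᵢ^t) Uᵀ`, using the real power `λ ^ t` (so `A^0 = I`, matching the
convention `C^{q-1} = I` when `q = 1`). -/
noncomputable def herPow {n : ℕ} {A : Matrix (Fin n) (Fin n) ℝ} (hA : A.IsHermitian)
    (t : ℝ) : Matrix (Fin n) (Fin n) ℝ :=
  (hA.eigenvectorUnitary : Matrix (Fin n) (Fin n) ℝ) *
    Matrix.diagonal (fun i => hA.eigenvalues i ^ t) *
    star (hA.eigenvectorUnitary : Matrix (Fin n) (Fin n) ℝ)

open Unitary

namespace Real

variable {ι : Type*} [Fintype ι] {a : ι → ℝ} {N Q : ℝ}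

lemma sum_mul_rpow_sub_one_rpow_holderConjugate {P : ℝ} (hPQ : P.HolderConjugate Q)
    (ha : 0 ≤ a) (hN : 0 < N) (hNQ : N ^ Q = ∑ i, a i ^ Q) {r : ℝ} (hr : 0 ≤ r) :
    (∑ i, (r * N ^ (-(Q - 1)) * a i ^ (Q - 1)) ^ P) ^ (1 / P) = r := by
  have hQP : (Q - 1) * P = Q := hPQ.symm.sub_one_mul_conj
  have hterm (i : ι) : (r * N ^ (-(Q - 1)) * a i ^ (Q - 1)) ^ P = r ^ P * (N ^ Q)⁻¹ * a i ^ Q := by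
    rw [mul_rpow (by positivity) (rpow_nonneg (ha i) _), mul_rpow hr (by positivity),
      ← rpow_mul hN.le, ← rpow_mul (ha i), neg_mul, hQP, rpow_neg hN.le]
  rw [Finset.sum_congr rfl fun i _ => hterm i, ← Finset.mul_sum, ← hNQ,
    inv_mul_cancel_right₀ (rpow_pos_of_pos hN Q).ne', ← rpow_mul hr,
    mul_one_div_cancel hPQ.ne_zero, rpow_one]

lemma mul_sum_rpow_sub_one_mul_self (hQ : Q ≠ 0) (ha : 0 ≤ a) (hN : 0 < N)
    (hNQ : N ^ Q = ∑ i, a i ^ Q) (r : ℝ) :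
    r * N ^ (-(Q - 1)) * ∑ i, a i ^ (Q - 1) * a i = r * N := by
  have hterm (i : ι) : a i ^ (Q - 1) * a i = a i ^ Q := by
    rw [← rpow_add_one' (ha i) (by simpa using hQ), sub_add_cancel]
  rw [Finset.sum_congr rfl fun i _ => hterm i, ← hNQ, mul_assoc, ← rpow_add hN]
  norm_num

end Real

namespace Matrix

variable {m : Type*} [Fintype m] [DecidableEq m]

lemma trace_conjStarAlgAut {R : Type*} [CommRing R] [StarRing R] (U : unitary (Matrix m m R))
    (A : Matrix m m R) : (conjStarAlgAut R _ U A).trace = A.trace := by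
  rw [conjStarAlgAut_apply, trace_mul_cycle, coe_star_mul_self, one_mul]

lemma PosSemidef.conjStarAlgAut {R : Type*} [CommRing R] [PartialOrder R] [StarRing R]
    {A : Matrix m m R} (hA : A.PosSemidef) (U : unitary (Matrix m m R)) :
    (Unitary.conjStarAlgAut R _ U A).PosSemidef := by
  simpa [star_eq_conjTranspose] using hA.mul_mul_conjTranspose_same (U : Matrix m m R)

lemma IsHermitian.eq_conjStarAlgAut_diagonal {A : Matrix m m ℝ} (hA : A.IsHermitian) :
    A = conjStarAlgAut ℝ _ hA.eigenvectorUnitary (diagonal hA.eigenvalues) := by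
  simpa using hA.spectral_theorem

open Polynomial in
lemma IsHermitian.map_eigenvalues_eq_of_eq_conjStarAlgAut_diagonal {M : Matrix m m ℝ}
    (hM : M.IsHermitian) (U : unitary (Matrix m m ℝ)) (d : m → ℝ)
    (h : M = conjStarAlgAut ℝ _ U (diagonal d)) :
    Finset.univ.val.map hM.eigenvalues = Finset.univ.val.map d := by
  have hchar : M.charpoly = (diagonal d).charpoly := by
    rw [h, conjStarAlgAut_apply, charpoly_mul_comm, ← mul_assoc, coe_star_mul_self, one_mul]
  have := hM.roots_charpoly_eq_eigenvalues
  rw [hchar, charpoly_diagonal,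
    roots_prod _ _ (by simp [Finset.prod_ne_zero_iff, X_sub_C_ne_zero])] at this
  simpa using this.symm

end Matrix

section Schatten

variable {n : ℕ}

lemma map_singVals_conjStarAlgAut_diagonal (U : unitary (Matrix (Fin n) (Fin n) ℝ))
    {a : Fin n → ℝ} (ha : 0 ≤ a) :
    Finset.univ.val.map (singVals (conjStarAlgAut ℝ _ U (diagonal a))) =
      Finset.univ.val.map a := by
  set A := conjStarAlgAut ℝ _ U (diagonal a)
  have hAt : Aᵀ = A := by
    rw [← conjTranspose_eq_transpose_of_trivial, ← star_eq_conjTranspose, ← map_star,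
      star_eq_conjTranspose, diagonal_conjTranspose, star_trivial]
  have hAA : Aᵀ * A = conjStarAlgAut ℝ _ U (diagonal (a * a)) := by
    rw [hAt, ← map_mul, diagonal_mul_diagonal]
    rfl
  have hAAh : (Aᵀ * A).IsHermitian := by
    simpa using isHermitian_conjTranspose_mul_self A
  calc Finset.univ.val.map (singVals A)
      = (Finset.univ.val.map hAAh.eigenvalues).map Real.sqrt := (Multiset.map_map _ _ _).symm
    _ = (Finset.univ.val.map (a * a)).map Real.sqrt := by
      rw [hAAh.map_eigenvalues_eq_of_eq_conjStarAlgAut_diagonal U _ hAA]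
    _ = Finset.univ.val.map a := by
      simp only [Multiset.map_map, Function.comp_def, Pi.mul_apply, Real.sqrt_mul_self (ha _)]

lemma Matrix.PosSemidef.map_singVals {C : Matrix (Fin n) (Fin n) ℝ} (hC : C.PosSemidef) :
    Finset.univ.val.map (singVals C) = Finset.univ.val.map hC.1.eigenvalues := by
  conv_lhs => rw [hC.1.eq_conjStarAlgAut_diagonal]
  exact map_singVals_conjStarAlgAut_diagonal _ hC.eigenvalues_nonneg

lemma schattenNorm_eq_of_map_singVals (p : ℝ≥0∞) {A : Matrix (Fin n) (Fin n) ℝ}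
    {s : Fin n → ℝ} (h : Finset.univ.val.map (singVals A) = Finset.univ.val.map s) :
    schattenNorm p A = if p = ⊤ then ⨆ i, s i else (∑ i, s i ^ p.toReal) ^ (1 / p.toReal) := by
  have hrange : Set.range (singVals A) = Set.range s := by
    ext x
    simpa using congrArg (x ∈ ·) h
  have hsum : ∑ i, singVals A i ^ p.toReal = ∑ i, s i ^ p.toReal := by
    simpa [Finset.sum_eq_multiset_sum, Multiset.map_map, Function.comp_def] using
      congrArg (fun m => (m.map (· ^ p.toReal)).sum) h
  rw [schattenNorm, iSup, iSup, hrange, hsum]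

lemma Matrix.PosSemidef.schattenNorm_rpow {q : ℝ≥0∞} (hq0 : q ≠ 0) (hq : q ≠ ⊤)
    {C : Matrix (Fin n) (Fin n) ℝ} (hC : C.PosSemidef) :
    schattenNorm q C ^ q.toReal = ∑ i, hC.1.eigenvalues i ^ q.toReal := by
  rw [schattenNorm_eq_of_map_singVals q hC.map_singVals, if_neg hq, one_div,
    Real.rpow_inv_rpow (Finset.sum_nonneg fun i _ => Real.rpow_nonneg (hC.eigenvalues_nonneg i) _)
      (ENNReal.toReal_ne_zero.mpr ⟨hq0, hq⟩)]

lemma Matrix.PosSemidef.schattenNorm_pos {q : ℝ≥0∞} (hq : q ≠ ⊤)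
    {C : Matrix (Fin n) (Fin n) ℝ} (hC : C.PosSemidef) (hC0 : C ≠ 0) :
    0 < schattenNorm q C := by
  obtain ⟨i, hi⟩ := Function.ne_iff.mp (hC.1.eigenvalues_eq_zero_iff.not.mpr hC0)
  have hsum : 0 < ∑ i, hC.1.eigenvalues i ^ q.toReal :=
    Finset.sum_pos' (fun j _ => Real.rpow_nonneg (hC.eigenvalues_nonneg j) _)
      ⟨i, Finset.mem_univ i, Real.rpow_pos_of_pos ((hC.eigenvalues_nonneg i).lt_of_ne' hi) _⟩
  rw [schattenNorm_eq_of_map_singVals q hC.map_singVals, if_neg hq]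
  exact Real.rpow_pos_of_pos hsum _

lemma schattenNorm_conjStarAlgAut_diagonal_holderDual [Nonempty (Fin n)] {p q : ℝ≥0∞}
    [p.HolderConjugate q] (hq : q ≠ ⊤) (U : unitary (Matrix (Fin n) (Fin n) ℝ)) {a : Fin n → ℝ}
    (ha : 0 ≤ a) {N : ℝ} (hN : 0 < N) (hNQ : N ^ q.toReal = ∑ i, a i ^ q.toReal) {r : ℝ}
    (hr : 0 ≤ r) :
    schattenNorm p (conjStarAlgAut ℝ _ U
      (diagonal fun i => r * N ^ (-(q.toReal - 1)) * a i ^ (q.toReal - 1))) = r := by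
  have hnonneg : 0 ≤ fun i => r * N ^ (-(q.toReal - 1)) * a i ^ (q.toReal - 1) :=
    fun i => mul_nonneg (mul_nonneg hr (Real.rpow_nonneg hN.le _)) (Real.rpow_nonneg (ha i) _)
  rw [schattenNorm_eq_of_map_singVals p (map_singVals_conjStarAlgAut_diagonal U hnonneg)]
  split_ifs with hp
  · simp [(ENNReal.HolderConjugate.eq_top_iff_eq_one p q).mp hp]
  · exact Real.sum_mul_rpow_sub_one_rpow_holderConjugate
      (ENNReal.HolderConjugate.toReal_of_ne_top hp hq) ha hN hNQ hr

end Schatten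

section herPow

variable {n : ℕ} {A : Matrix (Fin n) (Fin n) ℝ}

lemma herPow_eq_conjStarAlgAut (hA : A.IsHermitian) (t : ℝ) :
    herPow hA t =
      conjStarAlgAut ℝ _ hA.eigenvectorUnitary (diagonal fun i => hA.eigenvalues i ^ t) :=
  rfl

lemma herPow_mul_self (hA : A.IsHermitian) (t : ℝ) :
    herPow hA t * A = conjStarAlgAut ℝ _ hA.eigenvectorUnitary
      (diagonal fun i => hA.eigenvalues i ^ t * hA.eigenvalues i) := by
  conv_lhs => arg 2; rw [hA.eq_conjStarAlgAut_diagonal]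
  rw [herPow_eq_conjStarAlgAut, ← map_mul, diagonal_mul_diagonal]

end herPow

theorem stmt3_general {n : ℕ} (p q : ℝ≥0∞) (hq' : q ≠ ⊤)
    (hpq : p⁻¹ + q⁻¹ = 1)
    (Sighat C : Matrix (Fin n) (Fin n) ℝ) (hSig : Sighat.PosSemidef) (hC : C.PosSemidef)
    (hC0 : C ≠ 0) (r₂ : ℝ) (hr₂ : 0 ≤ r₂)
    (Sigstar : Matrix (Fin n) (Fin n) ℝ)
    (hSigstar : Sigstar = Sighat +
        (r₂ * schattenNorm q C ^ (-(q.toReal - 1))) • herPow hC.1 (q.toReal - 1)) :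
    Sigstar.PosSemidef ∧ schattenNorm p (Sigstar - Sighat) = r₂ ∧
      (Sigstar * C).trace = (Sighat * C).trace + r₂ * schattenNorm q C := by
  have : p.HolderConjugate q := ENNReal.holderConjugate_iff.mpr hpq
  set U := hC.1.eigenvectorUnitary
  set ev := hC.1.eigenvalues
  set N := schattenNorm q C
  have hev : 0 ≤ ev := hC.eigenvalues_nonneg
  have hN : 0 < N := hC.schattenNorm_pos hq' hC0
  have hNQ : N ^ q.toReal = ∑ i, ev i ^ q.toReal :=
    hC.schattenNorm_rpow (ENNReal.HolderConjugate.ne_zero q p) hq'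
  have hdiff : Sigstar - Sighat = conjStarAlgAut ℝ _ U
      (diagonal fun i => r₂ * N ^ (-(q.toReal - 1)) * ev i ^ (q.toReal - 1)) := by
    rw [hSigstar, add_sub_cancel_left, herPow_eq_conjStarAlgAut, ← map_smul, ← diagonal_smul]
    rfl
  have hdiff_nonneg : 0 ≤ fun i => r₂ * N ^ (-(q.toReal - 1)) * ev i ^ (q.toReal - 1) :=
    fun i => mul_nonneg (mul_nonneg hr₂ (Real.rpow_nonneg hN.le _)) (Real.rpow_nonneg (hev i) _)
  have : Nonempty (Fin n) := by
    contrapose! hC0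
    exact Subsingleton.elim _ _
  refine ⟨?_, ?_, ?_⟩
  · rw [← add_sub_cancel Sighat Sigstar, hdiff]
    exact hSig.add ((PosSemidef.diagonal hdiff_nonneg).conjStarAlgAut U)
  · rw [hdiff]
    exact schattenNorm_conjStarAlgAut_diagonal_holderDual hq' U hev hN hNQ hr₂
  · rw [hSigstar, add_mul, trace_add, smul_mul, trace_smul, herPow_mul_self,
      trace_conjStarAlgAut, trace_diagonal, smul_eq_mul,
      Real.mul_sum_rpow_sub_one_mul_self _ hev hN hNQ]
    exact (ENNReal.toReal_pos (ENNReal.HolderConjugate.ne_zero q p) hq').ne'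

/-- For `p ∈ (1,∞]`, `q ∈ [1,∞)` with `1/p + 1/q = 1`, PSD `Σ̂`,
`r₂ ≥ 0`, and PSD `C ≠ 0`, the matrix `Σ⋆ := Σ̂ + r₂‖C‖_q^{-(q-1)} C^{q-1}` is PSD,
satisfies `‖Σ⋆-Σ̂‖_p = r₂` and `tr(Σ⋆C) = tr(Σ̂C) + r₂‖C‖_q`. -/
theorem stmt3 {n : ℕ} (p q : ℝ≥0∞) (hp : 1 < p) (hq : 1 ≤ q) (hq' : q ≠ ⊤)
    (hpq : p⁻¹ + q⁻¹ = 1)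
    (Sighat C : Matrix (Fin n) (Fin n) ℝ) (hSig : Sighat.PosSemidef) (hC : C.PosSemidef)
    (hC0 : C ≠ 0) (r₂ : ℝ) (hr₂ : 0 ≤ r₂)
    (Sigstar : Matrix (Fin n) (Fin n) ℝ)
    (hSigstar : Sigstar = Sighat +
        (r₂ * schattenNorm q C ^ (-(q.toReal - 1))) • herPow hC.1 (q.toReal - 1)) :
    Sigstar.PosSemidef ∧ schattenNorm p (Sigstar - Sighat) = r₂ ∧
      (Sigstar * C).trace = (Sighat * C).trace + r₂ * schattenNorm q C :=
  stmt3_general p q hq' hpq Sighat C hSig hC hC0 r₂ hr₂ Sigstar hSigstar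
end
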